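/- Let $A$ be a unital associative ring and let $k > 1$ be an integer. Then for all $a_1, \dots, a_k, b_1, b_2, b_3 \in A$, the element $3\,[a_1, \dots, a_k][b_1, b_2, b_3]$ belongs to $T^{(k+2)}(A)$. -/
import Mathlib

/-- The ring commutator `[a, b] = a * b - b * a`. -/
def brk {A : Type*} [NonUnitalNonAssocRing A] (a b : A) : A := a * b - b * a

/-- The left-normed commutator `[a 0, a 1, ..., a (k-1)]`. -/
def lnc {A : Type*} [NonUnitalNonAssocRing A] : ∀ {k : ℕ}, (Fin k → A) → A
  | 0, _ => 0
  | 1, a => a 0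
  | k + 2, a => brk (lnc (Fin.init a)) (a (Fin.last (k + 1)))

/-- `T A m` is the two-sided ideal of `A` generated by all left-normed commutators
of length `m` (for `m = 1` this is all of `A`). -/
def T (A : Type*) [NonUnitalNonAssocRing A] (m : ℕ) : TwoSidedIdeal A :=
  TwoSidedIdeal.span {x | ∃ a : Fin m → A, x = lnc a}

lemma lnc_succ {A : Type*} [Ring A] {n : ℕ} (a : Fin (n + 2) → A) :
    lnc a = brk (lnc (Fin.init a)) (a (Fin.last (n + 1))) := rfl

lemma lnc_snoc {A : Type*} [Ring A] {n : ℕ} (a : Fin (n + 1) → A) (x : A) :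
    lnc (Fin.snoc a x) = brk (lnc a) x := by
  rw [lnc_succ (Fin.snoc a x), Fin.init_snoc, Fin.snoc_last]

lemma main_aux {A : Type*} [Ring A] (I : TwoSidedIdeal A) (p q b₁ b₂ b₃ : A)
    (H : ∀ x y z : A, brk (brk (brk p x) y) z ∈ I) :
    3 * (brk p q * brk (brk b₁ b₂) b₃) ∈ I := by
  have H2 : ∀ r x y z s : A, r * brk (brk (brk p x) y) z * s ∈ I := fun r x y z s =>
    I.mul_mem_right _ _ (I.mul_mem_left _ _ (H x y z))
  have key : 3 * (brk p q * brk (brk b₁ b₂) b₃) =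
      (3 : A) * brk (brk (brk p q) b₁) b₂ * b₃ +
      (2 : A) * brk (brk (brk p q) b₁) b₃ * b₂ +
      (-1 : A) * brk (brk (brk p q) b₂) b₁ * b₃ +
      (2 : A) * brk (brk (brk p q) b₃) b₂ * b₁ +
      (1 : A) * brk (brk (brk p b₁) q) b₂ * b₃ +
      ((2 : A) * b₂) * brk (brk (brk p b₁) q) b₃ * 1 +
      ((1 : A) * b₃) * brk (brk (brk p b₁) b₂) q * 1 +
      (1 : A) * brk (brk (brk p b₁) b₂) q * b₃ +
      (1 : A) * brk (brk (brk p b₁) b₂) b₃ * q +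
      (1 : A) * brk (brk (brk p b₁) b₃) q * b₂ +
      (2 : A) * brk (brk (brk p b₁) b₃) b₂ * q +
      ((2 : A) * b₃) * brk (brk (brk p b₂) q) b₁ * 1 +
      (-1 : A) * brk (brk (brk p b₂) q) b₁ * b₃ +
      ((1 : A) * q) * brk (brk (brk p b₂) b₁) b₃ * 1 +
      (1 : A) * brk (brk (brk p b₂) b₃) q * b₁ +
      ((3 : A) * b₂) * brk (brk (brk p b₃) q) b₁ * 1 +
      (-1 : A) * brk (brk (brk p b₃) q) b₁ * b₂ +
      ((-1 : A) * b₁) * brk (brk (brk p b₃) q) b₂ * 1 +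
      (1 : A) * brk (brk (brk p b₃) q) b₂ * b₁ +
      ((2 : A) * q) * brk (brk (brk p b₃) b₁) b₂ * 1 +
      ((2 : A) * b₁) * brk (brk (brk p b₃) b₂) q * 1 +
      (-2 : A) * brk (brk (brk p (q * b₁)) b₃) b₂ * 1 +
      (-2 : A) * brk (brk (brk p (q * b₂)) b₁) b₃ * 1 +
      (-3 : A) * brk (brk (brk p (q * b₃)) b₁) b₂ * 1 +
      (1 : A) * brk (brk (brk p (q * b₃)) b₂) b₁ * 1 +
      (-1 : A) * brk (brk (brk p (b₁ * b₂)) q) b₃ * 1 +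
      (-1 : A) * brk (brk (brk p (b₁ * b₂)) b₃) q * 1 +
      (-1 : A) * brk (brk (brk p (b₁ * b₃)) q) b₂ * 1 +
      (-2 : A) * brk (brk (brk p (b₁ * b₃)) b₂) q * 1 +
      (-1 : A) * brk (brk (brk p (b₂ * b₃)) q) b₁ * 1 +
      (1 : A) * brk (brk (brk p b₂) (q * b₁)) b₃ * 1 +
      (1 : A) * brk (brk (brk p b₃) (q * b₁)) b₂ * 1 +
      (-1 : A) * brk (brk (brk p b₁) (q * b₂)) b₃ * 1 +
      (-1 : A) * brk (brk (brk p b₃) (q * b₂)) b₁ * 1 := by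
    simp only [brk]; noncomm_ring
  rw [key]
  exact add_mem (add_mem (add_mem (add_mem (add_mem (add_mem (add_mem (add_mem (add_mem (add_mem (add_mem (add_mem (add_mem (add_mem (add_mem (add_mem (add_mem (add_mem (add_mem (add_mem (add_mem (add_mem (add_mem (add_mem (add_mem (add_mem (add_mem (add_mem (add_mem (add_mem (add_mem (add_mem (add_mem (H2 _ _ _ _ _) (H2 _ _ _ _ _)) (H2 _ _ _ _ _)) (H2 _ _ _ _ _)) (H2 _ _ _ _ _)) (H2 _ _ _ _ _)) (H2 _ _ _ _ _)) (H2 _ _ _ _ _)) (H2 _ _ _ _ _)) (H2 _ _ _ _ _)) (H2 _ _ _ _ _)) (H2 _ _ _ _ _)) (H2 _ _ _ _ _)) (H2 _ _ _ _ _)) (H2 _ _ _ _ _)) (H2 _ _ _ _ _)) (H2 _ _ _ _ _)) (H2 _ _ _ _ _)) (H2 _ _ _ _ _)) (H2 _ _ _ _ _)) (H2 _ _ _ _ _)) (H2 _ _ _ _ _)) (H2 _ _ _ _ _)) (H2 _ _ _ _ _)) (H2 _ _ _ _ _)) (H2 _ _ _ _ _)) (H2 _ _ _ _ _)) (H2 _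 _ _ _ _)) (H2 _ _ _ _ _)) (H2 _ _ _ _ _)) (H2 _ _ _ _ _)) (H2 _ _ _ _ _)) (H2 _ _ _ _ _)) (H2 _ _ _ _ _)

theorem three_mul_comm_mul_comm3_mem {A : Type*} [Ring A] (k : ℕ) (hk : 1 < k)
    (a : Fin k → A) (b₁ b₂ b₃ : A) :
    3 * (lnc a * lnc ![b₁, b₂, b₃]) ∈ T A (k + 2) := by
  obtain ⟨j, rfl⟩ : ∃ j, k = j + 2 := ⟨k - 2, by omega⟩
  have hla : lnc a = brk (lnc (Fin.init a)) (a (Fin.last (j + 1))) := rfl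
  have hb : lnc ![b₁, b₂, b₃] = brk (brk b₁ b₂) b₃ := rfl
  rw [hla, hb]
  exact main_aux _ _ _ _ _ _ (fun x y z => by
    rw [← lnc_snoc, ← lnc_snoc, ← lnc_snoc]
    exact TwoSidedIdeal.subset_span ⟨_, rfl⟩)
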